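/- arXiv:2304.08758 — 4 statements merged into one kernel-verified Lean document; each statement's English description precedes it below -/
import Mathlib

section
/- Let n ≥ 1. For every diagonal unitary matrix D of size 2^n with entries exp(iα_x), x ∈ {0,1}^n, there exist a global phase θ_∅ ∈ ℝ and angles {θ_S : ∅ ≠ S ⊆ {1,...,n}} such that D = e^{iθ_∅} · Π_S G(S,θ_S). Explicitly, one may take θ_S = (-1)^{|S|} Σ_{T ⊆ S} (-1)^{|T|} α_{χ(T)}, where χ(T) ∈ {0,1}^n is the indicator string of T and α_{χ(T)} is the phase of D at that basis state. -/
open scoped BigOperators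
open Finset

lemma neg_one_powerset {m : ℕ} (U : Finset (Fin m)) :
    (∑ T ∈ U.powerset, (-1 : ℝ) ^ T.card) = if U = ∅ then 1 else 0 := by
  have h := Finset.sum_powerset_neg_one_pow_card (x := U)
  have h2 : ((∑ T ∈ U.powerset, (-1 : ℤ) ^ T.card : ℤ) : ℝ)
      = ((if U = ∅ then (1:ℤ) else 0 : ℤ) : ℝ) := by rw [h]
  push_cast at h2
  simpa using h2

lemma filter_subset_powerset {m : ℕ} {S U : Finset (Fin m)} (hS : S ⊆ U) :
    U.powerset.filter (· ⊆ S) = S.powerset := by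
  ext T
  simp only [mem_filter, mem_powerset]
  exact ⟨fun h => h.2, fun h => ⟨h.trans hS, h⟩⟩

lemma filter_supset_sum {m : ℕ} {T U : Finset (Fin m)} (hT : T ⊆ U) :
    (∑ S ∈ U.powerset.filter (T ⊆ ·), (-1 : ℝ) ^ S.card)
      = (-1 : ℝ) ^ T.card * (if U = T then 1 else 0) := by
  have key : (∑ R ∈ (U \ T).powerset, (-1 : ℝ) ^ (T ∪ R).card)
      = ∑ S ∈ U.powerset.filter (T ⊆ ·), (-1 : ℝ) ^ S.card := by
    refine Finset.sum_nbij' (fun R => T ∪ R) (fun S => S \ T) ?_ ?_ ?_ ?_ ?_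
    · intro R hR
      rw [mem_powerset] at hR
      simp only [mem_filter, mem_powerset]
      exact ⟨union_subset hT (hR.trans sdiff_subset), subset_union_left⟩
    · intro S hS
      simp only [mem_filter, mem_powerset] at hS
      rw [mem_powerset]
      exact sdiff_subset_sdiff hS.1 le_rfl
    · intro R hR
      rw [mem_powerset] at hR
      exact union_sdiff_cancel_left (disjoint_of_subset_right hR disjoint_sdiff)
    · intro S hS
      simp only [mem_filter, mem_powerset] at hS
      exact union_sdiff_of_subset hS.2
    · intro R hR
      rfl
  rw [← key]
  have h3 : ∀ R ∈ (U \ T).powerset, ((-1:ℝ)) ^ (T ∪ R).card = (-1:ℝ)^T.card * (-1:ℝ)^R.card := by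
    intro R hR
    rw [mem_powerset] at hR
    rw [card_union_of_disjoint (disjoint_of_subset_right hR disjoint_sdiff), pow_add]
  rw [Finset.sum_congr rfl h3, ← mul_sum, neg_one_powerset]
  congr 1
  simp only [sdiff_eq_empty_iff_subset]
  by_cases h : U = T
  · simp [h]
  · rw [if_neg h, if_neg]
    intro hsub
    exact h (le_antisymm hsub hT)

lemma mobius {m : ℕ} (α : (Fin m → Bool) → ℝ) (θ : Finset (Fin m) → ℝ)
    (hθ : ∀ S : Finset (Fin m),
      θ S = (-1 : ℝ) ^ S.card *
        ∑ T ∈ S.powerset, (-1 : ℝ) ^ T.card * α (fun j => decide (j ∈ T)))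
    (U : Finset (Fin m)) :
    ∑ S ∈ U.powerset, θ S = α (fun j => decide (j ∈ U)) := by
  simp only [hθ, mul_sum]
  have h1 : ∀ S ∈ U.powerset,
      (∑ T ∈ S.powerset, (-1:ℝ)^S.card * ((-1:ℝ)^T.card * α (fun j => decide (j ∈ T))))
      = ∑ T ∈ U.powerset, if T ⊆ S then (-1:ℝ)^S.card * ((-1:ℝ)^T.card * α (fun j => decide (j ∈ T))) else 0 := by
    intro S hS
    rw [mem_powerset] at hS
    rw [← sum_filter, filter_subset_powerset hS]
  rw [Finset.sum_congr rfl h1, Finset.sum_comm]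
  have h2 : ∀ T ∈ U.powerset,
      (∑ S ∈ U.powerset, if T ⊆ S then (-1:ℝ)^S.card * ((-1:ℝ)^T.card * α (fun j => decide (j ∈ T))) else 0)
      = (if U = T then 1 else 0) * α (fun j => decide (j ∈ T)) := by
    intro T hT
    rw [mem_powerset] at hT
    rw [← sum_filter, ← sum_mul, filter_supset_sum hT]
    have hsq : (-1:ℝ)^T.card * (-1:ℝ)^T.card = 1 := by
      rw [← pow_add, ← two_mul, pow_mul, neg_one_sq, one_pow]
    calc (-1:ℝ)^T.card * (if U = T then 1 else 0) * ((-1:ℝ)^T.card * α (fun j => decide (j ∈ T)))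
        = ((-1:ℝ)^T.card * (-1:ℝ)^T.card) * ((if U = T then 1 else 0) * α (fun j => decide (j ∈ T))) := by ring
      _ = (if U = T then 1 else 0) * α (fun j => decide (j ∈ T)) := by rw [hsq, one_mul]
  rw [Finset.sum_congr rfl h2]
  simp only [ite_mul, one_mul, zero_mul]
  rw [Finset.sum_ite_eq]
  simp [mem_powerset]

/-- The multiple-control Z-rotation gate on qubit set `S` with angle `θ`:
a `2^n × 2^n` diagonal matrix whose `(x,x)` entry is `exp(i θ ∏_{j∈S} x_j)`. -/
noncomputable def MCZR (n : ℕ) (S : Finset (Fin n)) (θ : ℝ) :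
    Matrix (Fin n → Bool) (Fin n → Bool) ℂ :=
  Matrix.diagonal fun x =>
    Complex.exp (Complex.I * (θ : ℂ) * ∏ j ∈ S, (if x j then 1 else 0))

lemma diag_list_prod {ι n' : Type*} [DecidableEq n'] [Fintype n'] (L : List ι) (d : ι → n' → ℂ) :
    (L.map fun i => Matrix.diagonal (d i)).prod
      = Matrix.diagonal (fun x => (L.map fun i => d i x).prod) := by
  induction L with
  | nil => simp
  | cons a l ih =>
      simp only [List.map_cons, List.prod_cons, ih, Matrix.diagonal_mul_diagonal]

lemma indicator_prod {m : ℕ} (S : Finset (Fin m)) (x : Fin m → Bool) :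
    (∏ j ∈ S, (if x j then (1:ℂ) else 0))
      = if S ⊆ univ.filter (fun j => x j = true) then 1 else 0 := by
  by_cases h : S ⊆ univ.filter (fun j => x j = true)
  · rw [if_pos h, Finset.prod_eq_one]
    intro j hj
    have := h hj
    rw [mem_filter] at this
    rw [if_pos this.2]
  · rw [if_neg h]
    obtain ⟨j, hjS, hj⟩ : ∃ j ∈ S, x j = false := by
      simpa [Finset.subset_iff, mem_filter] using h
    exact Finset.prod_eq_zero hjS (by rw [hj]; simp)

theorem stmt6 (n : ℕ) (hn : 1 ≤ n) (α : (Fin n → Bool) → ℝ)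
    (θ : Finset (Fin n) → ℝ)
    (hθ : ∀ S : Finset (Fin n),
      θ S = (-1 : ℝ) ^ S.card *
        ∑ T ∈ S.powerset, (-1 : ℝ) ^ T.card * α (fun j => decide (j ∈ T)))
    (L : List (Finset (Fin n))) (hnd : L.Nodup)
    (hmem : ∀ S : Finset (Fin n), S ∈ L ↔ S ≠ ∅) :
    Complex.exp (Complex.I * ((θ ∅ : ℝ) : ℂ)) • (L.map fun S => MCZR n S (θ S)).prod
      = Matrix.diagonal fun x : Fin n → Bool =>
          Complex.exp (Complex.I * ((α x : ℝ) : ℂ)) := by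
  classical
  simp only [MCZR]
  have hprod : (L.map fun S => (Matrix.diagonal fun x : Fin n → Bool =>
        Complex.exp (Complex.I * (θ S:ℂ) * ∏ j ∈ S, (if x j then (1:ℂ) else 0)))).prod
      = Matrix.diagonal (fun x : Fin n → Bool =>
          (L.map fun S => Complex.exp (Complex.I * (θ S:ℂ) * ∏ j ∈ S, (if x j then (1:ℂ) else 0))).prod) :=
    diag_list_prod L _
  rw [hprod, ← Matrix.diagonal_smul]
  refine congrArg Matrix.diagonal (funext fun x => ?_)
  rw [Pi.smul_apply]
  set Fx : Finset (Fin n) := univ.filter (fun j => x j = true) with hFx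
  have hxFx : (fun j => decide (j ∈ Fx)) = x := by
    funext j
    simp [hFx]
  -- rewrite the list product as a finset product
  have hL : (L.map fun S => Complex.exp (Complex.I * (θ S:ℂ) * ∏ j ∈ S, (if x j then (1:ℂ) else 0))).prod
      = ∏ S ∈ L.toFinset, Complex.exp (Complex.I * (θ S:ℂ) * ∏ j ∈ S, (if x j then (1:ℂ) else 0)) :=
    (List.prod_toFinset _ hnd).symm
  have hfac : ∀ S : Finset (Fin n),
      Complex.I * (θ S:ℂ) * ∏ j ∈ S, (if x j then (1:ℂ) else 0)
        = Complex.I * (((if S ⊆ Fx then θ S else 0 : ℝ)) : ℂ) := by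
    intro S
    rw [indicator_prod, ← hFx, apply_ite (fun r : ℝ => (r : ℂ))]
    by_cases h : S ⊆ Fx <;> simp [h]
  have hsum : (∏ S ∈ L.toFinset, Complex.exp (Complex.I * (θ S:ℂ) * ∏ j ∈ S, (if x j then (1:ℂ) else 0)))
      = Complex.exp (Complex.I * ((∑ S ∈ L.toFinset, (if S ⊆ Fx then θ S else 0) : ℝ) : ℂ)) := by
    rw [← Complex.exp_sum]
    congr 1
    rw [Finset.sum_congr rfl (fun S _ => hfac S), ← Finset.mul_sum]
    congr 1
    push_cast
    rfl
  have key : θ ∅ + (∑ S ∈ L.toFinset, (if S ⊆ Fx then θ S else 0)) = α x := by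
    rw [← sum_filter]
    have hfilter : L.toFinset.filter (· ⊆ Fx) = Fx.powerset.erase ∅ := by
      ext S
      simp only [mem_filter, List.mem_toFinset, hmem, mem_erase, mem_powerset]
      try tauto
    rw [hfilter, Finset.add_sum_erase _ θ (Finset.empty_mem_powerset Fx),
      mobius α θ hθ Fx, hxFx]
  rw [hL, hsum, smul_eq_mul, ← Complex.exp_add, ← mul_add]
  congr 1
  congr 1
  push_cast [← key]
  ring
end

section
/- Let n ≥ 1. The angles realizing a diagonal unitary by MCZR gates are unique modulo 2π: if Σ_{v ⊆ x} θ_v ≡ Σ_{v ⊆ x} θ'_v (mod 2π) for all x ∈ {0,1}^n, where θ, θ' : {0,1}^n → ℝ, then θ_v ≡ θ'_v (mod 2π) for all v. -/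
theorem stmt7 (n : ℕ) (hn : 1 ≤ n) (θ θ' : Finset (Fin n) → ℝ)
    (h : ∀ x : Finset (Fin n), ∃ k : ℤ,
      (∑ v ∈ x.powerset, θ v) - (∑ v ∈ x.powerset, θ' v) = 2 * Real.pi * k) :
    ∀ v : Finset (Fin n), ∃ k : ℤ, θ v - θ' v = 2 * Real.pi * k := by
  intro v
  induction v using Finset.strongInduction with
  | _ v ih =>
    obtain ⟨k, hk⟩ := h v
    rw [← Finset.sum_sub_distrib] at hk
    have hv : v ∈ v.powerset := Finset.mem_powerset_self v
    rw [← Finset.sum_erase_add _ _ hv] at hk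
    set G : Finset (Fin n) → ℤ := fun w => if hw : w ⊂ v then (ih w hw).choose else 0
      with hG
    have hsum : ∑ w ∈ v.powerset.erase v, (θ w - θ' w)
        = 2 * Real.pi * ((∑ w ∈ v.powerset.erase v, G w : ℤ) : ℝ) := by
      push_cast
      rw [Finset.mul_sum]
      refine Finset.sum_congr rfl fun w hw => ?_
      have hwv : w ⊂ v := by
        rw [Finset.mem_erase, Finset.mem_powerset] at hw
        exact lt_of_le_of_ne hw.2 hw.1
      simp only [hG, dif_pos hwv]
      exact (ih w hwv).choose_spec
    refine ⟨k - ∑ w ∈ v.powerset.erase v, G w, ?_⟩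
    rw [hsum] at hk
    push_cast at hk ⊢
    linarith
end

section
/- Let n ≥ 2 and consider the 2^n possible MCZR gate labels v ∈ {0,1}^n \ {0^n} paired as (v, v̄) where v̄ is the bitwise complement, together with the singleton layer {1^n}. This yields a partition of all 2^n − 1 nonzero strings into 2^{n-1} − 1 complementary pairs plus the single string 1^n. Consequently, any diagonal unitary of size 2^n can be implemented by an MCZR circuit of depth at most 2^{n-1}. -/
open scoped BigOperators

namespace Stmt12Aux

open Finset

/-- Möbius (Walsh/monomial) coefficients of the phase function `α`. -/
noncomputable def theta (n : ℕ) (α : (Fin n → Bool) → ℝ) (S : Finset (Fin n)) : ℝ :=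
  ∑ T ∈ S.powerset, (-1 : ℝ) ^ (S.card - T.card) * α (fun j => decide (j ∈ T))

lemma neg_one_pow_sum {n : ℕ} (B : Finset (Fin n)) :
    ∑ V ∈ B.powerset, (-1 : ℝ) ^ V.card = if B = ∅ then 1 else 0 := by
  have h := Finset.sum_powerset_neg_one_pow_card (x := B)
  split_ifs with hB
  · subst hB; simp
  · rw [if_neg hB] at h
    exact_mod_cast h

lemma mobius {n : ℕ} (α : (Fin n → Bool) → ℝ) (U : Finset (Fin n)) :
    ∑ S ∈ U.powerset, theta n α S = α (fun j => decide (j ∈ U)) := by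
  unfold theta
  rw [Finset.sum_congr rfl (fun S hS => by
    rw [show S.powerset = U.powerset.filter (fun T => T ⊆ S) by
        ext T
        simp only [mem_powerset, mem_filter]
        exact ⟨fun h => ⟨h.trans (mem_powerset.1 hS), h⟩, fun h => h.2⟩,
      Finset.sum_filter])]
  rw [Finset.sum_comm]
  have h2 : ∀ T ∈ U.powerset,
      (∑ S ∈ U.powerset,
        if T ⊆ S then (-1:ℝ)^(S.card - T.card) * α (fun j => decide (j ∈ T)) else 0)
        = if T = U then α (fun j => decide (j ∈ T)) else 0 := by
    intro T hT
    have hTU : T ⊆ U := mem_powerset.1 hT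
    rw [← Finset.sum_filter]
    have key : U.powerset.filter (fun S => T ⊆ S)
        = (U \ T).powerset.image (fun V => T ∪ V) := by
      ext S
      simp only [mem_filter, mem_powerset, mem_image]
      constructor
      · rintro ⟨hSU, hTS⟩
        exact ⟨S \ T, sdiff_subset_sdiff hSU le_rfl, by
          rw [Finset.union_sdiff_of_subset hTS]⟩
      · rintro ⟨V, hV, rfl⟩
        exact ⟨union_subset hTU ((hV.trans (sdiff_subset))), subset_union_left⟩
    rw [key, Finset.sum_image (by
      intro V₁ h₁ V₂ h₂ hEq
      have d₁ : Disjoint T V₁ :=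
        (disjoint_sdiff.mono_right (mem_powerset.1 h₁))
      have d₂ : Disjoint T V₂ :=
        (disjoint_sdiff.mono_right (mem_powerset.1 h₂))
      rw [← Finset.union_sdiff_cancel_left d₁, ← Finset.union_sdiff_cancel_left d₂, show T ∪ V₁ = T ∪ V₂ from hEq])]
    have step : ∀ V ∈ (U \ T).powerset,
        (-1:ℝ)^((T ∪ V).card - T.card) * α (fun j => decide (j ∈ T))
          = (-1:ℝ)^V.card * α (fun j => decide (j ∈ T)) := by
      intro V hV
      have d : Disjoint T V := disjoint_sdiff.mono_right (mem_powerset.1 hV)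
      rw [Finset.card_union_of_disjoint d, Nat.add_sub_cancel_left]
    rw [Finset.sum_congr rfl step, ← Finset.sum_mul, neg_one_pow_sum]
    by_cases hTUeq : T = U
    · subst hTUeq
      simp
    · rw [if_neg hTUeq, if_neg, zero_mul]
      intro hEmpty
      exact hTUeq (subset_antisymm hTU (Finset.sdiff_eq_empty_iff_subset.1 hEmpty))
  rw [Finset.sum_congr rfl h2, Finset.sum_ite_eq' U.powerset U]
  rw [if_pos (mem_powerset.2 (subset_refl U))]

lemma sum_theta {n : ℕ} (α : (Fin n → Bool) → ℝ) (x : Fin n → Bool) :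
    ∑ S ∈ (Finset.univ : Finset (Finset (Fin n))),
        theta n α S * ∏ j ∈ S, (if x j then (1:ℝ) else 0) = α x := by
  classical
  set U : Finset (Fin n) := Finset.univ.filter (fun j => x j) with hUdef
  have hU : (fun j => decide (j ∈ U)) = x := by
    funext j; simp [hUdef]
  have hprod : ∀ S : Finset (Fin n),
      (∏ j ∈ S, (if x j then (1:ℝ) else 0)) = if S ⊆ U then 1 else 0 := by
    intro S
    split_ifs with h
    · exact Finset.prod_eq_one fun j hj => by
        have := (Finset.mem_filter.1 (h hj)).2
        simp [this]
    · obtain ⟨j, hjS, hjx⟩ : ∃ j ∈ S, ¬ x j := by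
        by_contra hc
        push_neg at hc
        exact h fun j hj => Finset.mem_filter.2 ⟨Finset.mem_univ j, hc j hj⟩
      exact Finset.prod_eq_zero hjS (by simp [hjx])
  simp_rw [hprod, mul_ite, mul_one, mul_zero]
  rw [← Finset.sum_filter]
  have : (Finset.univ : Finset (Finset (Fin n))).filter (fun S => S ⊆ U) = U.powerset := by
    ext S; simp [Finset.mem_powerset]
  rw [this, mobius, hU]


lemma list_prod_diagonal {n : ℕ} {ι : Type*} (l : List ι) (d : ι → (Fin n → Bool) → ℂ) :
    (l.map fun i => Matrix.diagonal (d i)).prod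
      = Matrix.diagonal (fun x => (l.map fun i => d i x).prod) := by
  induction l with
  | nil => simp
  | cons a l ih =>
      rw [List.map_cons, List.prod_cons, ih, Matrix.diagonal_mul_diagonal]
      refine congrArg Matrix.diagonal ?_
      funext x
      rw [List.map_cons, List.prod_cons]

section Struct

variable (n : ℕ) [NeZero n]

def emb : {j : Fin n // j ≠ 0} ↪ Fin n := Function.Embedding.subtype _

def SA (A : Finset {j : Fin n // j ≠ 0}) : Finset (Fin n) := A.map (emb n)

lemma zero_not_mem_SA (A : Finset {j : Fin n // j ≠ 0}) : (0 : Fin n) ∉ SA n A := by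
  simp only [SA, emb, Finset.mem_map, Function.Embedding.coe_subtype]
  rintro ⟨⟨j, hj⟩, _, rfl⟩
  exact hj rfl

lemma SA_ne_univ (A : Finset {j : Fin n // j ≠ 0}) : SA n A ≠ Finset.univ := by
  intro h
  exact zero_not_mem_SA n A (h ▸ Finset.mem_univ _)

lemma SA_injective : Function.Injective (SA n) :=
  fun _ _ h => Finset.map_injective (emb n) h

lemma SA_ne_empty {A : Finset {j : Fin n // j ≠ 0}} (hA : A ≠ ∅) : SA n A ≠ ∅ := by
  simpa [SA, Finset.map_eq_empty] using hA

lemma SA_compl_ne_empty (A : Finset {j : Fin n // j ≠ 0}) : (SA n A)ᶜ ≠ ∅ := by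
  intro h
  have : (0 : Fin n) ∈ (SA n A)ᶜ := Finset.mem_compl.2 (zero_not_mem_SA n A)
  simp [h] at this

lemma SA_ne_compl (A B : Finset {j : Fin n // j ≠ 0}) : SA n A ≠ (SA n B)ᶜ := by
  intro h
  have h0 : (0 : Fin n) ∈ (SA n B)ᶜ := Finset.mem_compl.2 (zero_not_mem_SA n B)
  exact zero_not_mem_SA n A (h ▸ h0)

lemma subtype_SA (A : Finset {j : Fin n // j ≠ 0}) :
    (SA n A).subtype (fun j => j ≠ 0) = A := by
  ext ⟨j, hj⟩
  simp only [Finset.mem_subtype, SA, emb, Finset.mem_map, Function.Embedding.coe_subtype]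
  constructor
  · rintro ⟨⟨k, hk⟩, hmem, rfl⟩
    exact hmem
  · intro h
    exact ⟨⟨j, hj⟩, h, rfl⟩

/-- One layer of the partition. -/
def layerF (A : Finset {j : Fin n // j ≠ 0}) : Finset (Finset (Fin n)) :=
  if A = ∅ then {Finset.univ} else {SA n A, (SA n A)ᶜ}

/-- Recover the index from a member of the layer. -/
def recover (T : Finset (Fin n)) : Finset {j : Fin n // j ≠ 0} :=
  (if (0 : Fin n) ∈ T then Tᶜ else T).subtype _

lemma recover_of_mem {A : Finset {j : Fin n // j ≠ 0}} {T : Finset (Fin n)}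
    (hT : T ∈ layerF n A) : recover n T = A := by
  unfold layerF at hT
  split_ifs at hT with hA
  · subst hA
    simp only [Finset.mem_singleton] at hT
    subst hT
    simp [recover, Finset.eq_empty_iff_forall_notMem]
  · simp only [Finset.mem_insert, Finset.mem_singleton] at hT
    rcases hT with rfl | rfl
    · rw [recover, if_neg (zero_not_mem_SA n A), subtype_SA]
    · rw [recover, if_pos (Finset.mem_compl.2 (zero_not_mem_SA n A)), compl_compl,
        subtype_SA]

noncomputable def eqv : Fin (2 ^ (n - 1)) ≃ Finset {j : Fin n // j ≠ 0} := by
  refine (Fintype.equivFinOfCardEq ?_).symm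
  rw [Fintype.card_finset]
  congr 1
  rw [Fintype.card_subtype_compl, Fintype.card_subtype_eq, Fintype.card_fin]

noncomputable def Ldef : Fin (2 ^ (n - 1)) → Finset (Finset (Fin n)) :=
  fun i => layerF n (eqv n i)

lemma layer_inner_disjoint (i : Fin (2 ^ (n - 1))) :
    ∀ a ∈ Ldef n i, ∀ b ∈ Ldef n i, a ≠ b → Disjoint a b := by
  intro a ha b hb hab
  unfold Ldef layerF at ha hb
  split_ifs at ha hb with hA
  · simp only [Finset.mem_singleton] at ha hb
    exact absurd (ha.trans hb.symm) hab
  · simp only [Finset.mem_insert, Finset.mem_singleton] at ha hb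
    rcases ha with rfl | rfl <;> rcases hb with rfl | rfl
    · exact absurd rfl hab
    · exact disjoint_compl_right
    · exact disjoint_compl_left
    · exact absurd rfl hab

lemma layer_cross_disjoint (i j : Fin (2 ^ (n - 1))) (hij : i ≠ j) :
    Disjoint (Ldef n i) (Ldef n j) := by
  rw [Finset.disjoint_left]
  intro T hTi hTj
  have h1 := recover_of_mem n (A := eqv n i) hTi
  have h2 := recover_of_mem n (A := eqv n j) hTj
  exact hij ((eqv n).injective (h1.symm.trans h2))

lemma layer_union :
    Finset.univ.biUnion (Ldef n)
      = Finset.univ.filter (fun S : Finset (Fin n) => S ≠ ∅) := by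
  ext T
  simp only [Finset.mem_biUnion, Finset.mem_univ, true_and, Finset.mem_filter]
  constructor
  · rintro ⟨i, hi⟩
    unfold Ldef layerF at hi
    split_ifs at hi with hA
    · simp only [Finset.mem_singleton] at hi
      subst hi
      exact Finset.univ_nonempty.ne_empty
    · simp only [Finset.mem_insert, Finset.mem_singleton] at hi
      rcases hi with rfl | rfl
      · exact SA_ne_empty n hA
      · exact SA_compl_ne_empty n _
  · intro hT
    by_cases h0 : (0 : Fin n) ∈ T
    · by_cases hu : T = Finset.univ
      · refine ⟨(eqv n).symm ∅, ?_⟩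
        unfold Ldef layerF
        rw [(eqv n).apply_symm_apply, if_pos rfl]
        simp [hu]
      · refine ⟨(eqv n).symm (Tᶜ.subtype _), ?_⟩
        unfold Ldef layerF
        rw [(eqv n).apply_symm_apply]
        have hS : SA n (Tᶜ.subtype fun j => j ≠ 0) = Tᶜ := by
          rw [SA, emb, Finset.subtype_map]
          apply Finset.filter_true_of_mem
          intro j hj hj0
          subst hj0
          exact (Finset.mem_compl.1 hj) h0
        have hne : (Tᶜ.subtype fun j => j ≠ 0) ≠ ∅ := by
          intro h
          have : SA n (Tᶜ.subtype fun j => j ≠ 0) = ∅ := by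
            rw [h]; simp [SA]
          rw [hS] at this
          exact hu (by simpa [Finset.compl_eq_empty_iff] using this)
        rw [if_neg hne, hS]
        simp
    · refine ⟨(eqv n).symm (T.subtype _), ?_⟩
      unfold Ldef layerF
      rw [(eqv n).apply_symm_apply]
      have hS : SA n (T.subtype fun j => j ≠ 0) = T := by
        rw [SA, emb, Finset.subtype_map]
        apply Finset.filter_true_of_mem
        intro j hj hj0
        subst hj0
        exact h0 hj
      have hne : (T.subtype fun j => j ≠ 0) ≠ ∅ := by
        intro h
        have : SA n (T.subtype fun j => j ≠ 0) = ∅ := by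
          rw [h]; simp [SA]
        rw [hS] at this
        exact hT this
      rw [if_neg hne, hS]
      simp

lemma layer_pairing (i : Fin (2 ^ (n - 1))) :
    ∀ a ∈ Ldef n i, a = Finset.univ ∨ (aᶜ ∈ Ldef n i ∧ (Ldef n i) = {a, aᶜ}) := by
  intro a ha
  unfold Ldef layerF at ha ⊢
  split_ifs at ha ⊢ with hA
  · simp only [Finset.mem_singleton] at ha
    exact Or.inl ha
  · simp only [Finset.mem_insert, Finset.mem_singleton] at ha
    rcases ha with rfl | rfl
    · exact Or.inr ⟨by simp, rfl⟩
    · refine Or.inr ⟨by simp, ?_⟩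
      rw [compl_compl, Finset.pair_comm]


/-- The gate list of one layer. -/
noncomputable def layerL (α : (Fin n → Bool) → ℝ) (A : Finset {j : Fin n // j ≠ 0}) :
    List (Finset (Fin n) × ℝ) :=
  if A = ∅ then [(Finset.univ, theta n α Finset.univ)]
  else [(SA n A, theta n α (SA n A)), ((SA n A)ᶜ, theta n α (SA n A)ᶜ)]

lemma layer_prod (α : (Fin n → Bool) → ℝ) (A : Finset {j : Fin n // j ≠ 0}) :
    ((layerL n α A).map fun p => MCZR n p.1 p.2).prod
      = Matrix.diagonal (fun x => Complex.exp (∑ S ∈ layerF n A,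
          Complex.I * (theta n α S : ℂ) * ∏ j ∈ S, (if x j then (1:ℂ) else 0))) := by
  unfold layerL layerF
  split_ifs with h
  · simp only [List.map_cons, List.map_nil, List.prod_cons, List.prod_nil, mul_one, MCZR]
    refine congrArg Matrix.diagonal ?_
    funext x
    rw [Finset.sum_singleton]
  · have hne : SA n A ≠ (SA n A)ᶜ := SA_ne_compl n A A
    simp only [List.map_cons, List.map_nil, List.prod_cons, List.prod_nil, mul_one, MCZR,
      Matrix.diagonal_mul_diagonal]
    refine congrArg Matrix.diagonal ?_
    funext x
    rw [Finset.sum_pair hne, Complex.exp_add]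

end Struct

end Stmt12Aux

theorem stmt12 (n : ℕ) (hn : 2 ≤ n) :
    (∃ L : Fin (2 ^ (n - 1)) → Finset (Finset (Fin n)),
        (∀ i, ∀ a ∈ L i, ∀ b ∈ L i, a ≠ b → Disjoint a b) ∧
        (∀ i j, i ≠ j → Disjoint (L i) (L j)) ∧
        (Finset.univ.biUnion L
          = Finset.univ.filter (fun S : Finset (Fin n) => S ≠ ∅)) ∧
        (∀ i, ∀ a ∈ L i, a = Finset.univ ∨ (aᶜ ∈ L i ∧ (L i) = {a, aᶜ}))) ∧
    ∀ α : (Fin n → Bool) → ℝ,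
      ∃ (θ₀ : ℝ) (Ls : List (List (Finset (Fin n) × ℝ))),
        Ls.length ≤ 2 ^ (n - 1) ∧
        (∀ layer ∈ Ls, (layer.map Prod.fst).Pairwise fun a b => Disjoint a b) ∧
        (∀ layer ∈ Ls, ∀ p ∈ layer, (p.1 : Finset (Fin n)) ≠ ∅) ∧
        Complex.exp (Complex.I * (θ₀ : ℂ)) •
            (Ls.map fun layer => (layer.map fun p => MCZR n p.1 p.2).prod).prod
          = Matrix.diagonal fun x : Fin n → Bool =>
              Complex.exp (Complex.I * ((α x : ℝ) : ℂ)) := by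
  haveI : NeZero n := ⟨by omega⟩
  classical
  open Stmt12Aux in
  constructor
  · exact ⟨Ldef n, layer_inner_disjoint n, layer_cross_disjoint n, layer_union n,
      layer_pairing n⟩
  · intro α
    refine ⟨theta n α ∅,
      (List.finRange (2 ^ (n - 1))).map (fun i => layerL n α (eqv n i)), ?_, ?_, ?_, ?_⟩
    · simp
    · intro layer hl
      simp only [List.mem_map, List.mem_finRange, true_and] at hl
      obtain ⟨i, rfl⟩ := hl
      unfold layerL
      split_ifs with h
      · simp
      · simp only [List.map_cons, List.map_nil]
        refine List.pairwise_cons.2 ⟨?_, by simp⟩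
        intro b hb
        simp only [List.mem_cons, List.not_mem_nil, or_false] at hb
        subst hb
        exact disjoint_compl_right
    · intro layer hl p hp
      simp only [List.mem_map, List.mem_finRange, true_and] at hl
      obtain ⟨i, rfl⟩ := hl
      unfold layerL at hp
      split_ifs at hp with h
      · simp only [List.mem_cons, List.not_mem_nil, or_false] at hp
        subst hp
        exact Finset.univ_nonempty.ne_empty
      · simp only [List.mem_cons, List.not_mem_nil, or_false] at hp
        rcases hp with rfl | rfl
        · exact SA_ne_empty n h
        · exact SA_compl_ne_empty n _
    · rw [List.map_map]
      have hcomp : ((fun layer => (List.map (fun p => MCZR n p.1 p.2) layer).prod) ∘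
              fun i => layerL n α (eqv n i))
          = fun i : Fin (2 ^ (n - 1)) =>
              Matrix.diagonal (fun x => Complex.exp (∑ S ∈ layerF n (eqv n i),
                Complex.I * (theta n α S : ℂ) * ∏ j ∈ S, (if x j then (1:ℂ) else 0))) :=
        funext fun i => layer_prod n α (eqv n i)
      rw [hcomp, list_prod_diagonal, ← Matrix.diagonal_smul]
      refine congrArg Matrix.diagonal ?_
      funext x
      simp only [Pi.smul_apply, smul_eq_mul]
      rw [show ((List.finRange (2 ^ (n - 1))).map fun i =>
              Complex.exp (∑ S ∈ layerF n (eqv n i),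
                Complex.I * (theta n α S : ℂ) * ∏ j ∈ S, (if x j then (1:ℂ) else 0))).prod
          = ∏ i : Fin (2 ^ (n - 1)), Complex.exp (∑ S ∈ layerF n (eqv n i),
                Complex.I * (theta n α S : ℂ) * ∏ j ∈ S, (if x j then (1:ℂ) else 0))
        from (Fin.prod_univ_def _).symm]
      rw [← Complex.exp_sum, ← Complex.exp_add]
      congr 1
      set f : Finset (Fin n) → ℂ :=
        fun S => Complex.I * (theta n α S : ℂ) * ∏ j ∈ S, (if x j then (1:ℂ) else 0) with hf
      have hb : ∑ i : Fin (2 ^ (n - 1)), ∑ S ∈ layerF n (eqv n i), f S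
          = ∑ S ∈ Finset.univ.biUnion (Ldef n), f S :=
        (Finset.sum_biUnion (fun i _ j _ hij => layer_cross_disjoint n i j hij)).symm
      rw [hb, layer_union]
      have hsplit := Finset.sum_filter_add_sum_filter_not
        (Finset.univ : Finset (Finset (Fin n))) (fun S => S ≠ ∅) f
      have hnotfilter : (Finset.univ : Finset (Finset (Fin n))).filter
          (fun S => ¬ S ≠ ∅) = {∅} := by
        ext S; simp
      rw [hnotfilter, Finset.sum_singleton] at hsplit
      have hfempty : f ∅ = Complex.I * (theta n α ∅ : ℂ) := by
        simp [hf]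
      have : Complex.I * (theta n α ∅ : ℂ)
            + ∑ S ∈ Finset.univ.filter (fun S : Finset (Fin n) => S ≠ ∅), f S
          = ∑ S ∈ (Finset.univ : Finset (Finset (Fin n))), f S := by
        rw [← hsplit, hfempty]; ring
      rw [this]
      have hcastprod : ∀ S : Finset (Fin n),
          ((∏ j ∈ S, (if x j then (1:ℝ) else 0) : ℝ) : ℂ)
            = ∏ j ∈ S, (if x j then (1:ℂ) else 0) := by
        intro S
        rw [Complex.ofReal_prod]
        exact Finset.prod_congr rfl fun j _ => by split_ifs <;> simp
      have hcast : ∀ S : Finset (Fin n), f S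
          = Complex.I * ((theta n α S * ∏ j ∈ S, (if x j then (1:ℝ) else 0) : ℝ) : ℂ) := by
        intro S
        rw [Complex.ofReal_mul, hcastprod S, hf]
        ring
      rw [Finset.sum_congr rfl (fun S _ => hcast S), ← Finset.mul_sum,
        ← Complex.ofReal_sum, sum_theta]
end

section
/- Let n ≥ 1 and let S1 ≠ S2 be distinct nonempty subsets of {1,...,n}, and let θ1, θ2 ∈ ℝ with θ1, θ2 ∉ 2πℤ. Then G(S1,θ1) ≠ λ·G(S2,θ2) for any complex scalar λ; i.e., distinct MCZR gate supports yield non-proportional unitaries. -/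
open scoped BigOperators

lemma exp_ne_one_of_aux {θ : ℝ} (hθ : ¬∃ k : ℤ, θ = 2 * Real.pi * k) :
    Complex.exp (Complex.I * (θ : ℂ)) ≠ 1 := by
  intro h
  rw [Complex.exp_eq_one_iff] at h
  obtain ⟨k, hk⟩ := h
  apply hθ
  refine ⟨k, ?_⟩
  have h2 : (θ : ℂ) = 2 * Real.pi * k := by
    apply mul_left_cancel₀ Complex.I_ne_zero
    rw [hk]; ring
  exact_mod_cast h2

theorem stmt16 (n : ℕ) (hn : 1 ≤ n) (S1 S2 : Finset (Fin n)) (h12 : S1 ≠ S2)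
    (h1 : S1.Nonempty) (h2 : S2.Nonempty) (θ1 θ2 : ℝ)
    (hθ1 : ¬∃ k : ℤ, θ1 = 2 * Real.pi * k)
    (hθ2 : ¬∃ k : ℤ, θ2 = 2 * Real.pi * k) :
    ∀ lam : ℂ, MCZR n S1 θ1 ≠ lam • MCZR n S2 θ2 := by
  intro lam h
  have key : ∀ x : Fin n → Bool,
      Complex.exp (Complex.I * (θ1 : ℂ) * ∏ j ∈ S1, (if x j then (1:ℂ) else 0))
        = lam * Complex.exp (Complex.I * (θ2 : ℂ) * ∏ j ∈ S2, (if x j then (1:ℂ) else 0)) := by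
    intro x
    have := congrFun (congrFun h x) x
    simpa [MCZR, Matrix.diagonal_apply_eq, Matrix.smul_apply] using this
  have hall := key (fun _ => true)
  simp at hall
  have hsub : ¬ S1 ⊆ S2 ∨ ¬ S2 ⊆ S1 := by
    by_contra hc
    push_neg at hc
    exact h12 (Finset.Subset.antisymm hc.1 hc.2)
  rcases hsub with hns | hns
  · obtain ⟨j, hjS1, hjS2⟩ := Finset.not_subset.mp hns
    set x : Fin n → Bool := Function.update (fun _ => true) j false with hx
    have hp1 : (∏ i ∈ S1, (if x i then (1:ℂ) else 0)) = 0 :=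
      Finset.prod_eq_zero hjS1 (by simp [hx])
    have hp2 : (∏ i ∈ S2, (if x i then (1:ℂ) else 0)) = 1 := by
      apply Finset.prod_eq_one
      intro i hi
      have hij : i ≠ j := fun e => hjS2 (e ▸ hi)
      simp [hx, Function.update_of_ne hij]
    have hk := key x
    rw [hp1, hp2] at hk
    simp at hk
    -- hk : 1 = lam * exp(I θ2)
    have : Complex.exp (Complex.I * (θ1 : ℂ)) = 1 := by
      rw [hall, ← hk]
    exact exp_ne_one_of_aux hθ1 this
  · obtain ⟨j, hjS2, hjS1⟩ := Finset.not_subset.mp hns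
    set x : Fin n → Bool := Function.update (fun _ => true) j false with hx
    have hp2 : (∏ i ∈ S2, (if x i then (1:ℂ) else 0)) = 0 :=
      Finset.prod_eq_zero hjS2 (by simp [hx])
    have hp1 : (∏ i ∈ S1, (if x i then (1:ℂ) else 0)) = 1 := by
      apply Finset.prod_eq_one
      intro i hi
      have hij : i ≠ j := fun e => hjS1 (e ▸ hi)
      simp [hx, Function.update_of_ne hij]
    have hk := key x
    rw [hp1, hp2] at hk
    simp at hk
    -- hk : exp(I θ1) = lam
    have hlam0 : lam ≠ 0 := by
      rw [← hk]; exact Complex.exp_ne_zero _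
    have : Complex.exp (Complex.I * (θ2 : ℂ)) = 1 := by
      have h' : lam * 1 = lam * Complex.exp (Complex.I * (θ2 : ℂ)) := by
        rw [mul_one]; exact hk.symm.trans hall
      exact (mul_left_cancel₀ hlam0 h').symm
    exact exp_ne_one_of_aux hθ2 this
end
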